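/- Let H : ℂ → ℂ be given by H(h) = −(1/27)·(h−4)³/h² (with the junk value H(0) = 0 coming from division by zero). Let n ≥ 1 and z ∈ ℂ be such that the k-th iterate H^[k](z) is nonzero for every 0 ≤ k < n. If the derivative of the n-th iterate H^[n] at z vanishes, then H^[n](z) = 0 or H^[n](z) = 1. In other words, every finite critical value of every iterate H^(n) lies in {0, 1}. -/

import Mathlib

/-!
The chain rule writes the derivative of `H^[n]` at `z` as the product of the derivatives of `H`
along the orbit `z, H z, …, H^[n-1] z`. So if it vanishes, some `H^[k] z` is a critical point of
`H`, i.e. `4` or `-8`, whose images `0` and `1` are fixed by `H`.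
-/

/-- The hessian dynamical system in the coordinate `h = j/(2⁶·3³)`; note the
junk value `Hdyn 0 = 0` coming from Lean's division by zero. -/
noncomputable def Hdyn (h : ℂ) : ℂ := -(1 / 27) * (h - 4) ^ 3 / h ^ 2

open Function Set Finset

section Iterate

variable {𝕜 : Type*} [NontriviallyNormedField 𝕜] {f : 𝕜 → 𝕜} {n : ℕ} {z : 𝕜}

theorem hasDerivAt_iterate_of_differentiableAt_orbit
    (hf : ∀ k < n, DifferentiableAt 𝕜 f (f^[k] z)) :
    HasDerivAt f^[n] (∏ k ∈ range n, deriv f (f^[k] z)) z := by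
  induction n with
  | zero => simpa using hasDerivAt_id z
  | succ n ih =>
    have hcomp := (hf n n.lt_succ_self).hasDerivAt.comp z (ih fun k hk => hf k (by omega))
    rw [iterate_succ', prod_range_succ, mul_comm]
    exact hcomp

theorem iterate_mem_of_deriv_iterate_eq_zero {S : Set 𝕜} (hS : MapsTo f S S)
    (hf : ∀ k < n, DifferentiableAt 𝕜 f (f^[k] z))
    (hcrit : ∀ k < n, deriv f (f^[k] z) = 0 → f (f^[k] z) ∈ S)
    (h : deriv f^[n] z = 0) : f^[n] z ∈ S := by
  rw [(hasDerivAt_iterate_of_differentiableAt_orbit hf).deriv, prod_eq_zero_iff] at h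
  obtain ⟨k, hk, hk0⟩ := h
  have hkn : k < n := mem_range.mp hk
  have hmem := hS.iterate (n - (k + 1)) (hcrit k hkn hk0)
  rwa [← iterate_succ_apply' f k, ← iterate_add_apply, Nat.sub_add_cancel hkn] at hmem

end Iterate

theorem hasDerivAt_Hdyn {z : ℂ} (hz : z ≠ 0) :
    HasDerivAt Hdyn (-(1 / 27) * (z - 4) ^ 2 * (z + 8) / z ^ 3) z := by
  have hnum : HasDerivAt (fun h : ℂ => -(1 / 27) * (h - 4) ^ 3)
      (-(1 / 27) * (3 * (z - 4) ^ 2 * 1)) z :=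
    (((hasDerivAt_id z).sub_const 4).pow 3).const_mul _
  refine (hnum.div (hasDerivAt_pow 2 z) (pow_ne_zero 2 hz)).congr_deriv ?_
  field_simp
  ring

theorem Hdyn_mem_of_deriv_eq_zero {z : ℂ} (hz : z ≠ 0) (h : deriv Hdyn z = 0) :
    Hdyn z ∈ ({0, 1} : Set ℂ) := by
  rw [(hasDerivAt_Hdyn hz).deriv, div_eq_zero_iff, or_iff_left (pow_ne_zero 3 hz)] at h
  have hcrit : z = 4 ∨ z = -8 := by
    rcases mul_eq_zero.mp h with h | h
    · rw [mul_eq_zero, pow_eq_zero_iff two_ne_zero] at h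
      exact .inl (by linear_combination h.resolve_left (by norm_num))
    · exact .inr (by linear_combination h)
  rcases hcrit with rfl | rfl <;> norm_num [Hdyn]

theorem mapsTo_Hdyn_zero_one : MapsTo Hdyn {0, 1} {0, 1} := by
  rintro z (rfl | rfl) <;> norm_num [Hdyn]

theorem critical_values_of_iterates_general (n : ℕ) (z : ℂ)
    (horb : ∀ k, k < n → Hdyn^[k] z ≠ 0)
    (hcrit : deriv (Hdyn^[n]) z = 0) :
    Hdyn^[n] z = 0 ∨ Hdyn^[n] z = 1 :=
  iterate_mem_of_deriv_iterate_eq_zero mapsTo_Hdyn_zero_one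
    (fun k hk => (hasDerivAt_Hdyn (horb k hk)).differentiableAt)
    (fun k hk => Hdyn_mem_of_deriv_eq_zero (horb k hk)) hcrit

theorem critical_values_of_iterates (n : ℕ) (hn : 1 ≤ n) (z : ℂ)
    (horb : ∀ k, k < n → Hdyn^[k] z ≠ 0)
    (hcrit : deriv (Hdyn^[n]) z = 0) :
    Hdyn^[n] z = 0 ∨ Hdyn^[n] z = 1 :=
  critical_values_of_iterates_general n z horb hcrit
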